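/- arXiv:2202.13253 — 3 statements merged into one kernel-verified Lean document; each statement's English description precedes it below -/
import Mathlib

section
/- The modular lambda function satisfies λ(-1/τ) = 1 - λ(τ) for all τ in the upper half plane. -/
open Complex

/-- Jacobi theta function θ₂. -/
noncomputable def theta2 (τ : ℂ) : ℂ :=
  ∑' n : ℤ, Complex.exp ((Real.pi : ℂ) * I * ((n : ℂ) + 1/2) ^ 2 * τ)

/-- Jacobi theta function θ₃. -/
noncomputable def theta3 (τ : ℂ) : ℂ :=
  ∑' n : ℤ, Complex.exp ((Real.pi : ℂ) * I * (n : ℂ) ^ 2 * τ)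

/-- The modular lambda function `λ = (θ₂/θ₃)⁴`. -/
noncomputable def modularLambda (τ : ℂ) : ℂ := (theta2 τ / theta3 τ) ^ 4

namespace LambdaTransformAux

/-- Jacobi theta function θ₄. -/
noncomputable def theta4 (τ : ℂ) : ℂ :=
  ∑' n : ℤ, Complex.exp ((Real.pi : ℂ) * I * (n : ℂ) ^ 2 * τ) * (-1 : ℂ) ^ n

noncomputable def f2 (τ : ℂ) (n : ℤ) : ℂ :=
  Complex.exp ((Real.pi : ℂ) * I * ((n : ℂ) + 1/2) ^ 2 * τ)

noncomputable def f3 (τ : ℂ) (n : ℤ) : ℂ :=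
  Complex.exp ((Real.pi : ℂ) * I * (n : ℂ) ^ 2 * τ)

noncomputable def f4 (τ : ℂ) (n : ℤ) : ℂ := f3 τ n * (-1 : ℂ) ^ n

lemma summable_f3 {τ : ℂ} (hτ : 0 < τ.im) : Summable (f3 τ) := by
  refine ((summable_jacobiTheta₂_term_iff 0 τ).mpr hτ).congr fun n => ?_
  simp [jacobiTheta₂_term, f3]

lemma f2_eq (τ : ℂ) (n : ℤ) :
    f2 τ n = jacobiTheta₂_term n (τ/2) τ * Complex.exp ((Real.pi : ℂ) * I * τ / 4) := by
  rw [f2, jacobiTheta₂_term, ← Complex.exp_add]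
  congr 1
  push_cast
  ring

lemma summable_f2 {τ : ℂ} (hτ : 0 < τ.im) : Summable (f2 τ) := by
  refine (((summable_jacobiTheta₂_term_iff (τ/2) τ).mpr hτ).mul_right
    (Complex.exp ((Real.pi : ℂ) * I * τ / 4))).congr fun n => (f2_eq τ n).symm

lemma neg_one_zpow_int (n : ℤ) : (-1 : ℂ) ^ n = Complex.exp ((Real.pi : ℂ) * I * n) := by
  have : ((Real.pi : ℂ) * I * n) = n * ((Real.pi : ℂ) * I) := by ring
  rw [this, Complex.exp_int_mul, Complex.exp_pi_mul_I]

lemma f4_eq (τ : ℂ) (n : ℤ) : f4 τ n = jacobiTheta₂_term n (1/2) τ := by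
  rw [f4, f3, neg_one_zpow_int, jacobiTheta₂_term, ← Complex.exp_add]
  congr 1
  ring

lemma summable_f4 {τ : ℂ} (hτ : 0 < τ.im) : Summable (f4 τ) := by
  refine ((summable_jacobiTheta₂_term_iff (1/2) τ).mpr hτ).congr fun n => (f4_eq τ n).symm

lemma hasSum_f3 {τ : ℂ} (hτ : 0 < τ.im) : HasSum (f3 τ) (theta3 τ) :=
  (summable_f3 hτ).hasSum

lemma hasSum_f2 {τ : ℂ} (hτ : 0 < τ.im) : HasSum (f2 τ) (theta2 τ) :=
  (summable_f2 hτ).hasSum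

lemma hasSum_f4 {τ : ℂ} (hτ : 0 < τ.im) : HasSum (f4 τ) (theta4 τ) :=
  (summable_f4 hτ).hasSum

/-! ### Splitting a double sum over `ℤ × ℤ` by parity of the coordinate sum -/

def evenSet : Set (ℤ × ℤ) := {p | (p.1 + p.2) % 2 = 0}

def e1 : ℤ × ℤ ≃ evenSet where
  toFun p := ⟨(p.1 + p.2, p.1 - p.2), by simp only [evenSet, Set.mem_setOf_eq]; omega⟩
  invFun q := ((q.1.1 + q.1.2) / 2, (q.1.1 - q.1.2) / 2)
  left_inv p := by
    obtain ⟨a, b⟩ := p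
    simp only [Prod.mk.injEq]
    omega
  right_inv q := by
    obtain ⟨⟨m, n⟩, hq⟩ := q
    simp only [evenSet, Set.mem_setOf_eq] at hq
    apply Subtype.ext
    simp only [Prod.mk.injEq]
    omega

def e2 : ℤ × ℤ ≃ ↥(evenSetᶜ) where
  toFun p := ⟨(p.1 + p.2 + 1, p.1 - p.2), by
    simp only [evenSet, Set.mem_compl_iff, Set.mem_setOf_eq]; omega⟩
  invFun q := ((q.1.1 + q.1.2 - 1) / 2, (q.1.1 - q.1.2 - 1) / 2)
  left_inv p := by
    obtain ⟨a, b⟩ := p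
    simp only [Prod.mk.injEq]
    omega
  right_inv q := by
    obtain ⟨⟨m, n⟩, hq⟩ := q
    simp only [evenSet, Set.mem_compl_iff, Set.mem_setOf_eq] at hq
    apply Subtype.ext
    simp only [Prod.mk.injEq]
    omega

lemma hasSum_split {F : ℤ × ℤ → ℂ} {A B : ℂ}
    (hA : HasSum (fun p : ℤ × ℤ => F (p.1 + p.2, p.1 - p.2)) A)
    (hB : HasSum (fun p : ℤ × ℤ => F (p.1 + p.2 + 1, p.1 - p.2)) B) :
    HasSum F (A + B) := by
  have hA' : HasSum (F ∘ (↑) : evenSet → ℂ) A := e1.hasSum_iff.mp hA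
  have hB' : HasSum (F ∘ (↑) : ↥(evenSetᶜ) → ℂ) B := e2.hasSum_iff.mp hB
  exact hA'.add_isCompl isCompl_compl hB'

def shiftEquiv1 : ℤ ≃ ℤ :=
  ⟨fun a => a + 1, fun a => a - 1,
    fun a => by show a + 1 - 1 = a; omega, fun a => by show a - 1 + 1 = a; omega⟩

def negFlip : ℤ × ℤ ≃ ℤ × ℤ :=
  ⟨fun p => (p.1, -p.2 - 1), fun p => (p.1, -p.2 - 1),
    fun p => by
      obtain ⟨a, b⟩ := p
      show ((a, -(-b - 1) - 1) : ℤ × ℤ) = (a, b)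
      simp only [Prod.mk.injEq]
      exact ⟨trivial, by omega⟩,
    fun p => by
      obtain ⟨a, b⟩ := p
      show ((a, -(-b - 1) - 1) : ℤ × ℤ) = (a, b)
      simp only [Prod.mk.injEq]
      exact ⟨trivial, by omega⟩⟩

lemma summable_prod_mul {f g : ℤ → ℂ} (hf : Summable f) (hg : Summable g) :
    Summable (fun p : ℤ × ℤ => f p.1 * g p.2) :=
  summable_mul_of_summable_norm (summable_norm_iff.mpr hf) (summable_norm_iff.mpr hg)

lemma exp_eq_exp_of_sub (a b : ℂ) (n : ℤ) (h : a = b + n * (2 * (Real.pi : ℂ) * I)) :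
    Complex.exp a = Complex.exp b := by
  rw [h, Complex.exp_add, Complex.exp_int_mul_two_pi_mul_I, mul_one]

lemma two_mul_im {τ : ℂ} (hτ : 0 < τ.im) : 0 < (2 * τ).im := by
  rw [Complex.mul_im]
  simp only [Complex.ofReal_ofNat, Complex.re_ofNat, Complex.im_ofNat]
  nlinarith

set_option maxHeartbeats 1000000 in
/-- `θ₃(τ)² = θ₃(2τ)² + θ₂(2τ)²`. -/
lemma theta3_sq {τ : ℂ} (hτ : 0 < τ.im) :
    theta3 τ ^ 2 = theta3 (2 * τ) ^ 2 + theta2 (2 * τ) ^ 2 := by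
  have h2 := two_mul_im hτ
  have hF : Summable (fun p : ℤ × ℤ => f3 τ p.1 * f3 τ p.2) :=
    summable_prod_mul (summable_f3 hτ) (summable_f3 hτ)
  have hA : HasSum (fun p : ℤ × ℤ => f3 τ (p.1 + p.2) * f3 τ (p.1 - p.2))
      (theta3 (2 * τ) * theta3 (2 * τ)) := by
    have he : (fun p : ℤ × ℤ => f3 τ (p.1 + p.2) * f3 τ (p.1 - p.2))
        = fun p : ℤ × ℤ => f3 (2 * τ) p.1 * f3 (2 * τ) p.2 := by
      funext p
      simp only [f3, ← Complex.exp_add]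
      congr 1
      push_cast
      ring
    rw [he]
    exact (hasSum_f3 h2).mul (hasSum_f3 h2) (summable_prod_mul (summable_f3 h2) (summable_f3 h2))
  have hB : HasSum (fun p : ℤ × ℤ => f3 τ (p.1 + p.2 + 1) * f3 τ (p.1 - p.2))
      (theta2 (2 * τ) * theta2 (2 * τ)) := by
    have he : (fun p : ℤ × ℤ => f3 τ (p.1 + p.2 + 1) * f3 τ (p.1 - p.2))
        = fun p : ℤ × ℤ => f2 (2 * τ) p.1 * f2 (2 * τ) p.2 := by
      funext p
      simp only [f3, f2, ← Complex.exp_add]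
      congr 1
      push_cast
      ring
    rw [he]
    exact (hasSum_f2 h2).mul (hasSum_f2 h2) (summable_prod_mul (summable_f2 h2) (summable_f2 h2))
  have key := ((hasSum_f3 hτ).mul (hasSum_f3 hτ) hF).unique (hasSum_split hA hB)
  linear_combination key

set_option maxHeartbeats 1000000 in
/-- `θ₄(τ)² = θ₃(2τ)² - θ₂(2τ)²`. -/
lemma theta4_sq {τ : ℂ} (hτ : 0 < τ.im) :
    theta4 τ ^ 2 = theta3 (2 * τ) ^ 2 - theta2 (2 * τ) ^ 2 := by
  have h2 := two_mul_im hτ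
  have hF : Summable (fun p : ℤ × ℤ => f4 τ p.1 * f4 τ p.2) :=
    summable_prod_mul (summable_f4 hτ) (summable_f4 hτ)
  have hA : HasSum (fun p : ℤ × ℤ => f4 τ (p.1 + p.2) * f4 τ (p.1 - p.2))
      (theta3 (2 * τ) * theta3 (2 * τ)) := by
    have he : (fun p : ℤ × ℤ => f4 τ (p.1 + p.2) * f4 τ (p.1 - p.2))
        = fun p : ℤ × ℤ => f3 (2 * τ) p.1 * f3 (2 * τ) p.2 := by
      funext p
      obtain ⟨a, b⟩ := p
      simp only [f4, f3, neg_one_zpow_int, ← Complex.exp_add]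
      refine exp_eq_exp_of_sub _ _ a ?_
      push_cast
      ring
    rw [he]
    exact (hasSum_f3 h2).mul (hasSum_f3 h2) (summable_prod_mul (summable_f3 h2) (summable_f3 h2))
  have hB : HasSum (fun p : ℤ × ℤ => f4 τ (p.1 + p.2 + 1) * f4 τ (p.1 - p.2))
      (-(theta2 (2 * τ) * theta2 (2 * τ))) := by
    have he : (fun p : ℤ × ℤ => f4 τ (p.1 + p.2 + 1) * f4 τ (p.1 - p.2))
        = fun p : ℤ × ℤ => -(f2 (2 * τ) p.1 * f2 (2 * τ) p.2) := by
      funext p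
      obtain ⟨a, b⟩ := p
      have hm : ∀ x : ℂ, -x = Complex.exp ((Real.pi : ℂ) * I) * x := by
        intro x; rw [Complex.exp_pi_mul_I]; ring
      simp only [f4, f3, f2, neg_one_zpow_int]
      rw [hm]
      simp only [← Complex.exp_add]
      refine exp_eq_exp_of_sub _ _ a ?_
      push_cast
      ring
    rw [he]
    exact ((hasSum_f2 h2).mul (hasSum_f2 h2)
      (summable_prod_mul (summable_f2 h2) (summable_f2 h2))).neg
  have key := ((hasSum_f4 hτ).mul (hasSum_f4 hτ) hF).unique (hasSum_split hA hB)
  linear_combination key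

set_option maxHeartbeats 1000000 in
/-- `θ₂(τ)² = 2 θ₂(2τ) θ₃(2τ)`. -/
lemma theta2_sq {τ : ℂ} (hτ : 0 < τ.im) :
    theta2 τ ^ 2 = 2 * theta2 (2 * τ) * theta3 (2 * τ) := by
  have h2 := two_mul_im hτ
  have hF : Summable (fun p : ℤ × ℤ => f2 τ p.1 * f2 τ p.2) :=
    summable_prod_mul (summable_f2 hτ) (summable_f2 hτ)
  have hA : HasSum (fun p : ℤ × ℤ => f2 τ (p.1 + p.2) * f2 τ (p.1 - p.2))
      (theta2 (2 * τ) * theta3 (2 * τ)) := by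
    have he : (fun p : ℤ × ℤ => f2 τ (p.1 + p.2) * f2 τ (p.1 - p.2))
        = fun p : ℤ × ℤ => f2 (2 * τ) p.1 * f3 (2 * τ) p.2 := by
      funext p
      simp only [f2, f3, ← Complex.exp_add]
      congr 1
      push_cast
      ring
    rw [he]
    exact (hasSum_f2 h2).mul (hasSum_f3 h2) (summable_prod_mul (summable_f2 h2) (summable_f3 h2))
  have hB : HasSum (fun p : ℤ × ℤ => f2 τ (p.1 + p.2 + 1) * f2 τ (p.1 - p.2))
      (theta3 (2 * τ) * theta2 (2 * τ)) := by
    have he : (fun p : ℤ × ℤ => f2 τ (p.1 + p.2 + 1) * f2 τ (p.1 - p.2))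
        = fun p : ℤ × ℤ => f3 (2 * τ) (p.1 + 1) * f2 (2 * τ) p.2 := by
      funext p
      simp only [f2, f3, ← Complex.exp_add]
      congr 1
      push_cast
      ring
    rw [he]
    have hshift : HasSum (fun a : ℤ => f3 (2 * τ) (a + 1)) (theta3 (2 * τ)) :=
      (shiftEquiv1.hasSum_iff (f := f3 (2 * τ)) (a := theta3 (2 * τ))).mpr (hasSum_f3 h2)
    have hsum : Summable (fun a : ℤ => f3 (2 * τ) (a + 1)) :=
      (shiftEquiv1.summable_iff (f := f3 (2 * τ))).mpr (summable_f3 h2)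
    exact hshift.mul (hasSum_f2 h2)
      (summable_prod_mul (f := fun a : ℤ => f3 (2 * τ) (a + 1)) hsum (summable_f2 h2))
  have key := ((hasSum_f2 hτ).mul (hasSum_f2 hτ) hF).unique (hasSum_split hA hB)
  linear_combination key

set_option maxHeartbeats 1000000 in
/-- `θ₃(τ) θ₄(τ) = θ₄(2τ)²`. -/
lemma theta3_mul_theta4 {τ : ℂ} (hτ : 0 < τ.im) :
    theta3 τ * theta4 τ = theta4 (2 * τ) ^ 2 := by
  have h2 := two_mul_im hτ
  have hF : Summable (fun p : ℤ × ℤ => f3 τ p.1 * f4 τ p.2) :=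
    summable_prod_mul (summable_f3 hτ) (summable_f4 hτ)
  have hA : HasSum (fun p : ℤ × ℤ => f3 τ (p.1 + p.2) * f4 τ (p.1 - p.2))
      (theta4 (2 * τ) * theta4 (2 * τ)) := by
    have he : (fun p : ℤ × ℤ => f3 τ (p.1 + p.2) * f4 τ (p.1 - p.2))
        = fun p : ℤ × ℤ => f4 (2 * τ) p.1 * f4 (2 * τ) p.2 := by
      funext p
      obtain ⟨a, b⟩ := p
      simp only [f4, f3, neg_one_zpow_int, ← Complex.exp_add]
      refine exp_eq_exp_of_sub _ _ (-b) ?_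
      push_cast
      ring
    rw [he]
    exact (hasSum_f4 h2).mul (hasSum_f4 h2) (summable_prod_mul (summable_f4 h2) (summable_f4 h2))
  have hB : HasSum (fun p : ℤ × ℤ => f3 τ (p.1 + p.2 + 1) * f4 τ (p.1 - p.2)) 0 := by
    have hginj : Function.Injective (fun p : ℤ × ℤ => ((p.1 + p.2 + 1, p.1 - p.2) : ℤ × ℤ)) := by
      intro p q h
      simp only [Prod.mk.injEq] at h
      ext
      · omega
      · omega
    have hg : Summable (fun p : ℤ × ℤ => f3 τ (p.1 + p.2 + 1) * f4 τ (p.1 - p.2)) :=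
      (hF.comp_injective hginj).congr fun p => rfl
    have hneg : ∀ p : ℤ × ℤ,
        f3 τ (p.1 + (-p.2 - 1) + 1) * f4 τ (p.1 - (-p.2 - 1))
          = -(f3 τ (p.1 + p.2 + 1) * f4 τ (p.1 - p.2)) := by
      intro p
      obtain ⟨a, b⟩ := p
      have hm : ∀ x : ℂ, -x = Complex.exp ((Real.pi : ℂ) * I) * x := by
        intro x; rw [Complex.exp_pi_mul_I]; ring
      simp only [f4, f3, neg_one_zpow_int]
      rw [hm]
      simp only [← Complex.exp_add]
      refine exp_eq_exp_of_sub _ _ b ?_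
      push_cast
      ring
    have hS := hg.hasSum
    have h' : HasSum (fun p : ℤ × ℤ => f3 τ (p.1 + (-p.2 - 1) + 1) * f4 τ (p.1 - (-p.2 - 1)))
        (∑' p : ℤ × ℤ, f3 τ (p.1 + p.2 + 1) * f4 τ (p.1 - p.2)) :=
      (negFlip.hasSum_iff
        (f := fun p : ℤ × ℤ => f3 τ (p.1 + p.2 + 1) * f4 τ (p.1 - p.2))).mpr hS
    have hfe : (fun p : ℤ × ℤ => -(f3 τ (p.1 + (-p.2 - 1) + 1) * f4 τ (p.1 - (-p.2 - 1))))
        = fun p : ℤ × ℤ => f3 τ (p.1 + p.2 + 1) * f4 τ (p.1 - p.2) :=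
      funext fun p => by rw [hneg p]; ring
    have h'' : HasSum (fun p : ℤ × ℤ => f3 τ (p.1 + p.2 + 1) * f4 τ (p.1 - p.2))
        (-∑' p : ℤ × ℤ, f3 τ (p.1 + p.2 + 1) * f4 τ (p.1 - p.2)) := by
      have h3 := h'.neg
      rw [hfe] at h3
      exact h3
    have h4 := hS.unique h''
    have h5 : (2 : ℂ) * ∑' p : ℤ × ℤ, f3 τ (p.1 + p.2 + 1) * f4 τ (p.1 - p.2) = 0 := by
      linear_combination h4
    have hzero : (∑' p : ℤ × ℤ, f3 τ (p.1 + p.2 + 1) * f4 τ (p.1 - p.2)) = 0 := by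
      simpa using h5
    exact hzero ▸ hS
  have key := ((hasSum_f3 hτ).mul (hasSum_f4 hτ) hF).unique (hasSum_split hA hB)
  linear_combination key

/-- Jacobi's identity `θ₂⁴ + θ₄⁴ = θ₃⁴`. -/
lemma jacobi_identity {τ : ℂ} (hτ : 0 < τ.im) :
    theta2 τ ^ 4 + theta4 τ ^ 4 = theta3 τ ^ 4 := by
  have h1 := theta3_sq hτ
  have h2 := theta4_sq hτ
  have h3 := theta2_sq hτ
  linear_combination (theta2 τ ^ 2 + 2 * theta2 (2 * τ) * theta3 (2 * τ)) * h3
    + (theta4 τ ^ 2 + theta3 (2 * τ) ^ 2 - theta2 (2 * τ) ^ 2) * h2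
    - (theta3 τ ^ 2 + theta3 (2 * τ) ^ 2 + theta2 (2 * τ) ^ 2) * h1

lemma theta3_eq_jacobiTheta (τ : ℂ) : theta3 τ = jacobiTheta τ := rfl

lemma theta4_eq_jacobiTheta (τ : ℂ) : theta4 τ = jacobiTheta (τ + 1) := by
  refine tsum_congr fun n => ?_
  show f3 τ n * (-1 : ℂ) ^ n = Complex.exp ((Real.pi : ℂ) * I * (n : ℂ) ^ 2 * (τ + 1))
  obtain ⟨k, hk⟩ := Int.even_mul_succ_self (n - 1)
  have hk' : ((n : ℂ) - 1) * ((n : ℂ) - 1 + 1) = k + k := by exact_mod_cast hk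
  rw [f3, neg_one_zpow_int, ← Complex.exp_add]
  refine exp_eq_exp_of_sub _ _ (-k) ?_
  push_cast
  linear_combination (-(Real.pi : ℂ) * I) * hk'

lemma theta3_eq₂ (τ : ℂ) : theta3 τ = jacobiTheta₂ 0 τ :=
  tsum_congr fun n => by simp [jacobiTheta₂_term]

lemma theta4_eq₂ (τ : ℂ) : theta4 τ = jacobiTheta₂ (1/2) τ :=
  tsum_congr fun n => f4_eq τ n

lemma theta2_eq₂ (τ : ℂ) :
    theta2 τ = jacobiTheta₂ (τ/2) τ * Complex.exp ((Real.pi : ℂ) * I * τ / 4) := by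
  rw [jacobiTheta₂, ← tsum_mul_right]
  exact tsum_congr fun n => f2_eq τ n

lemma cpow_half_ne_zero {τ : ℂ} (hτ : 0 < τ.im) : (-I * τ) ^ (1/2 : ℂ) ≠ 0 := by
  have hτ0 : τ ≠ 0 := fun h => by simp [h] at hτ
  rw [Ne, cpow_eq_zero_iff, not_and_or]
  exact Or.inl (mul_ne_zero (neg_ne_zero.mpr I_ne_zero) hτ0)

lemma theta3_S {τ : ℂ} (hτ : 0 < τ.im) :
    theta3 (-1/τ) = (-I * τ) ^ (1/2 : ℂ) * theta3 τ := by
  have hc := cpow_half_ne_zero hτ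
  have h := jacobiTheta₂_functional_equation 0 τ
  simp only [ne_eq, OfNat.ofNat_ne_zero, not_false_eq_true, zero_pow, mul_zero, zero_div,
    Complex.exp_zero, mul_one] at h
  rw [theta3_eq₂, theta3_eq₂, h, ← mul_assoc, mul_one_div, div_self hc, one_mul]

lemma theta2_S {τ : ℂ} (hτ : 0 < τ.im) :
    theta2 (-1/τ) = (-I * τ) ^ (1/2 : ℂ) * theta4 τ := by
  have hτ0 : τ ≠ 0 := fun h => by simp [h] at hτ
  have hc := cpow_half_ne_zero hτ
  have h := jacobiTheta₂_functional_equation (1/2) τ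
  rw [theta2_eq₂, theta4_eq₂]
  have hz : (-1/τ)/2 = -((1/2 : ℂ)/τ) := by ring
  rw [hz, jacobiTheta₂_neg_left, h]
  have hAB : (Real.pi : ℂ) * I * (-1/τ) / 4 = -(Real.pi : ℂ) * I * (1/2 : ℂ) ^ 2 / τ := by
    ring
  rw [hAB]
  field_simp

lemma jacobiTheta_ne_zero {σ : ℂ} (h1 : 1 ≤ σ.im) : jacobiTheta σ ≠ 0 := by
  have h0 : 0 < σ.im := by linarith
  intro H
  have hb := norm_jacobiTheta_sub_one_le h0
  rw [H] at hb
  simp only [zero_sub, norm_neg, norm_one] at hb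
  set x := Real.exp (-Real.pi * σ.im) with hx
  have hx0 : 0 < x := Real.exp_pos _
  have hx1 : x ≤ Real.exp (-3) := by
    apply Real.exp_le_exp.mpr
    nlinarith [Real.pi_gt_three]
  have h19 : (19 : ℝ) < Real.exp 3 := by
    have h := Real.exp_one_gt_d9
    calc (19 : ℝ) < 2.7182818283 ^ 3 := by norm_num
      _ ≤ Real.exp 1 ^ 3 := by gcongr
      _ = Real.exp 3 := by rw [Real.exp_one_pow]; norm_num
  have hx3 : x < 1/19 := by
    refine lt_of_le_of_lt hx1 ?_
    rw [Real.exp_neg]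
    rw [inv_lt_comm₀ (Real.exp_pos 3) (by norm_num : (0:ℝ) < 1/19)]
    simpa using h19
  have hlt : 2/(1-x)*x < 1 := by
    rw [div_mul_eq_mul_div, div_lt_one (by nlinarith)]
    nlinarith
  linarith

lemma theta3_theta4_ne_zero : ∀ τ : ℂ, 0 < τ.im → theta3 τ ≠ 0 ∧ theta4 τ ≠ 0 := by
  have key : ∀ n : ℕ, ∀ τ : ℂ, 0 < τ.im → 1 ≤ 2 ^ n * τ.im →
      theta3 τ ≠ 0 ∧ theta4 τ ≠ 0 := by
    intro n
    induction n with
    | zero =>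
      intro τ h h1
      rw [pow_zero, one_mul] at h1
      constructor
      · rw [theta3_eq_jacobiTheta]
        exact jacobiTheta_ne_zero h1
      · rw [theta4_eq_jacobiTheta]
        apply jacobiTheta_ne_zero
        simp only [Complex.add_im, Complex.one_im, add_zero]
        exact h1
    | succ n ih =>
      intro τ h h1
      have h2 : 0 < (2 * τ).im := two_mul_im h
      have him : (2 * τ).im = 2 * τ.im := by
        simp [Complex.mul_im]
      have h1' : 1 ≤ 2 ^ n * (2 * τ).im := by
        rw [him, pow_succ] at *
        nlinarith
      have h4 := (ih (2 * τ) h2 h1').2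
      have hD := theta3_mul_theta4 h
      have hne : theta3 τ * theta4 τ ≠ 0 := by
        rw [hD]
        exact pow_ne_zero 2 h4
      exact mul_ne_zero_iff.mp hne
  intro τ h
  obtain ⟨n, hn⟩ : ∃ n : ℕ, 1/τ.im < 2 ^ n := pow_unbounded_of_one_lt (1/τ.im) one_lt_two
  refine key n τ h ?_
  have := (div_lt_iff₀ h).mp hn
  linarith

end LambdaTransformAux

open LambdaTransformAux in
/-- The modular lambda function satisfies `λ(-1/τ) = 1 - λ(τ)`. -/
theorem lambda_transform (τ : ℂ) (hτ : 0 < τ.im) :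
    modularLambda (-1 / τ) = 1 - modularLambda τ := by
  obtain ⟨h3, h4⟩ := theta3_theta4_ne_zero τ hτ
  have hc : (-I * τ) ^ (1/2 : ℂ) ≠ 0 := cpow_half_ne_zero hτ
  have hJ := jacobi_identity hτ
  rw [modularLambda, modularLambda, theta2_S hτ, theta3_S hτ, mul_div_mul_left _ _ hc,
    div_pow, div_pow]
  field_simp
  linear_combination hJ
end

section
/- Clausen's identity: for parameters a, b and argument z in the disc of convergence, ₂F₁(a, b; a+b+1/2; z)² = ₃F₂(2a, 2b, a+b; 2a+2b, a+b+1/2; z). -/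
/-- The Pochhammer symbol (rising factorial) `(x)_k = x(x+1)⋯(x+k−1)`. -/
noncomputable def poch (x : ℝ) (k : ℕ) : ℝ := (ascPochhammer ℝ k).eval x

/-- The Gauss hypergeometric series `₂F₁(a,b;c;z)`. -/
noncomputable def F21 (a b c z : ℝ) : ℝ :=
  ∑' k : ℕ, poch a k * poch b k / (poch c k * (Nat.factorial k : ℝ)) * z ^ k

/-- The generalized hypergeometric series `₃F₂(a₁,a₂,a₃;b₁,b₂;z)`. -/
noncomputable def F32 (a1 a2 a3 b1 b2 z : ℝ) : ℝ :=
  ∑' k : ℕ, poch a1 k * poch a2 k * poch a3 k /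
    (poch b1 k * poch b2 k * (Nat.factorial k : ℝ)) * z ^ k

lemma poch_zero (x : ℝ) : poch x 0 = 1 := by simp [poch]

lemma poch_succ (x : ℝ) (k : ℕ) : poch x (k+1) = poch x k * (x + k) := by
  simp [poch, ascPochhammer_succ_eval]

lemma poch_ne_zero {x : ℝ} (h : ∀ n : ℕ, x ≠ -(n : ℝ)) (k : ℕ) : poch x k ≠ 0 := by
  induction k with
  | zero => simp [poch_zero]
  | succ k ih => rw [poch_succ]; exact mul_ne_zero ih (fun hxk => h k (by linarith))

/-- coefficient of ₂F₁ -/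
noncomputable def Ac (a b c : ℝ) (k : ℕ) : ℝ :=
  poch a k * poch b k / (poch c k * (Nat.factorial k : ℝ))

lemma Ac_zero (a b c : ℝ) : Ac a b c 0 = 1 := by simp [Ac, poch_zero]

lemma Ac_succ (a b c : ℝ) (hc : ∀ n : ℕ, c ≠ -(n : ℝ)) (k : ℕ) :
    Ac a b c (k+1) * (((k:ℝ)+1) * (c + k)) = Ac a b c k * ((a + k) * (b + k)) := by
  have h1 : poch c k ≠ 0 := poch_ne_zero hc k
  have h2 : (Nat.factorial k : ℝ) ≠ 0 := Nat.cast_ne_zero.mpr (Nat.factorial_ne_zero k)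
  have h3 : (c + (k:ℝ)) ≠ 0 := fun h => hc k (by linarith)
  have h4 : ((k:ℝ)+1) ≠ 0 := by positivity
  rw [Ac, Ac, poch_succ, poch_succ, poch_succ, Nat.factorial_succ]
  push_cast
  field_simp

set_option maxHeartbeats 1600000 in
/-- Local WZ-certificate identity for Clausen's coefficient recurrence. -/
lemma local_id (a b : ℝ) (hc : ∀ n : ℕ, a + b + 1/2 ≠ -(n : ℝ)) (k m : ℕ) :
    (((k:ℝ)+(m:ℝ))+1) * ((a+b+1/2) + ((k:ℝ)+(m:ℝ))) * (2*(a+b) + ((k:ℝ)+(m:ℝ)))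
        * (Ac a b (a+b+1/2) k * Ac a b (a+b+1/2) (m+1))
      - (2*a + ((k:ℝ)+(m:ℝ))) * (2*b + ((k:ℝ)+(m:ℝ))) * ((a+b) + ((k:ℝ)+(m:ℝ)))
        * (Ac a b (a+b+1/2) k * Ac a b (a+b+1/2) m)
    = (((k:ℝ)+1) * (2*((k:ℝ)+1)^2 - 3*(((k:ℝ)+(m:ℝ))+1)*((k:ℝ)+1) + 1 + (3/2)*((k:ℝ)+(m:ℝ))
          - (a+b) - 3*((k:ℝ)+(m:ℝ))*(a+b) - 2*(a+b)^2))
        * (Ac a b (a+b+1/2) (k+1) * Ac a b (a+b+1/2) m)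
      - ((k:ℝ) * (2*(k:ℝ)^2 - 3*(((k:ℝ)+(m:ℝ))+1)*(k:ℝ) + 1 + (3/2)*((k:ℝ)+(m:ℝ))
          - (a+b) - 3*((k:ℝ)+(m:ℝ))*(a+b) - 2*(a+b)^2))
        * (Ac a b (a+b+1/2) k * Ac a b (a+b+1/2) (m+1)) := by
  have hcK : ((a+b+1/2) + (k:ℝ)) ≠ 0 := fun h => hc k (by linarith)
  have hcM : ((a+b+1/2) + (m:ℝ)) ≠ 0 := fun h => hc m (by linarith)
  have hK : ((k:ℝ)+1) ≠ 0 := by positivity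
  have hM : ((m:ℝ)+1) ≠ 0 := by positivity
  have hu := Ac_succ a b (a+b+1/2) hc k
  have hv := Ac_succ a b (a+b+1/2) hc m
  set u := Ac a b (a+b+1/2) k with hudef
  set v := Ac a b (a+b+1/2) m with hvdef
  set u' := Ac a b (a+b+1/2) (k+1) with hu'def
  set v' := Ac a b (a+b+1/2) (m+1) with hv'def
  apply mul_right_cancel₀ (b := (((k:ℝ)+1) * ((a+b+1/2) + (k:ℝ)) * (((m:ℝ)+1) * ((a+b+1/2) + (m:ℝ)))))
    ?_ ?_
  · exact mul_ne_zero (mul_ne_zero hK hcK) (mul_ne_zero hM hcM)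
  · set K := (k:ℝ)
    set M := (m:ℝ)
    linear_combination
      ((((K+M)+1) * ((a+b+1/2)+(K+M)) * (2*(a+b)+(K+M))
          + (K * (2*K^2 - 3*((K+M)+1)*K + 1 + (3/2)*(K+M) - (a+b) - 3*(K+M)*(a+b) - 2*(a+b)^2)))
        * u * (((K:ℝ)+1) * ((a+b+1/2)+K))) * hv
      - (((K+1) * (2*(K+1)^2 - 3*((K+M)+1)*(K+1) + 1 + (3/2)*(K+M) - (a+b) - 3*(K+M)*(a+b)
          - 2*(a+b)^2)) * v * ((M+1) * ((a+b+1/2)+M))) * hu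

/-- partial Cauchy-product coefficient -/
noncomputable def Sc (a b : ℝ) (n : ℕ) : ℝ :=
  ∑ k ∈ Finset.range (n+1), Ac a b (a+b+1/2) k * Ac a b (a+b+1/2) (n-k)

/-- the ₃F₂ coefficient -/
noncomputable def Bc (a b : ℝ) (n : ℕ) : ℝ :=
  poch (2*a) n * poch (2*b) n * poch (a+b) n /
    (poch (2*a+2*b) n * poch (a+b+1/2) n * (Nat.factorial n : ℝ))

set_option maxHeartbeats 1600000 in
lemma Sc_rec (a b : ℝ) (hc : ∀ n : ℕ, a + b + 1/2 ≠ -(n : ℝ)) (n : ℕ) :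
    ((n:ℝ)+1) * ((a+b+1/2) + (n:ℝ)) * (2*(a+b) + (n:ℝ)) * Sc a b (n+1)
      = (2*a + (n:ℝ)) * (2*b + (n:ℝ)) * ((a+b) + (n:ℝ)) * Sc a b n := by
  set A := Ac a b (a+b+1/2) with hA
  set α := ((n:ℝ)+1) * ((a+b+1/2) + (n:ℝ)) * (2*(a+b) + (n:ℝ)) with hα
  set β := (2*a + (n:ℝ)) * (2*b + (n:ℝ)) * ((a+b) + (n:ℝ)) with hβ
  set g : ℕ → ℝ := fun k =>
    ((k:ℝ) * (2*(k:ℝ)^2 - 3*((n:ℝ)+1)*(k:ℝ) + 1 + (3/2)*(n:ℝ)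
      - (a+b) - 3*(n:ℝ)*(a+b) - 2*(a+b)^2)) * (A k * A (n+1-k)) with hg
  have tele : ∑ k ∈ Finset.range (n+1), (g (k+1) - g k) = g (n+1) - g 0 :=
    Finset.sum_range_sub g (n+1)
  have hterm : ∀ k ∈ Finset.range (n+1),
      α * (A k * A (n+1-k)) - β * (A k * A (n-k)) = g (k+1) - g k := by
    intro k hk
    have hkn : k ≤ n := Nat.lt_succ_iff.mp (Finset.mem_range.mp hk)
    have hm : n + 1 - k = (n - k) + 1 := by omega
    have hm2 : n + 1 - (k + 1) = n - k := by omega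
    have hcast : ((n - k : ℕ) : ℝ) = (n:ℝ) - (k:ℝ) := Nat.cast_sub hkn
    have hloc := local_id a b hc k (n - k)
    rw [hcast] at hloc
    simp only [hg, hm, hm2, hα, hβ]
    push_cast
    linear_combination hloc
  have hsum : ∑ k ∈ Finset.range (n+1),
      (α * (A k * A (n+1-k)) - β * (A k * A (n-k))) = g (n+1) - g 0 := by
    rw [Finset.sum_congr rfl hterm]; exact tele
  have hg0 : g 0 = 0 := by simp [hg]
  have hgn : g (n+1) = -α * (A (n+1) * A 0) := by
    simp only [hg, Nat.add_sub_cancel, Nat.sub_self, hα]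
    push_cast
    ring
  have expand : α * Sc a b (n+1) - β * Sc a b n
      = (∑ k ∈ Finset.range (n+1), (α * (A k * A (n+1-k)) - β * (A k * A (n-k))))
        + α * (A (n+1) * A 0) := by
    rw [Sc, Sc, Finset.mul_sum, Finset.mul_sum]
    rw [Finset.sum_range_succ (f := fun k => α * (A k * A (n+1-k)))]
    simp only [Nat.sub_self, Finset.sum_sub_distrib]
    ring
  have : α * Sc a b (n+1) - β * Sc a b n = 0 := by
    rw [expand, hsum, hg0, hgn]; ring
  linarith

lemma Bc_mul (a b : ℝ) (hc : ∀ n : ℕ, a + b + 1/2 ≠ -(n : ℝ))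
    (h2 : ∀ n : ℕ, 2 * a + 2 * b ≠ -(n : ℝ)) (n : ℕ) :
    Bc a b n * (poch (2*a+2*b) n * poch (a+b+1/2) n * (Nat.factorial n : ℝ))
      = poch (2*a) n * poch (2*b) n * poch (a+b) n :=
  div_mul_cancel₀ _ (mul_ne_zero (mul_ne_zero (poch_ne_zero h2 n) (poch_ne_zero hc n))
      (Nat.cast_ne_zero.mpr (Nat.factorial_ne_zero n)))

set_option maxHeartbeats 1600000 in
lemma Bc_rec (a b : ℝ) (hc : ∀ n : ℕ, a + b + 1/2 ≠ -(n : ℝ))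
    (h2 : ∀ n : ℕ, 2 * a + 2 * b ≠ -(n : ℝ)) (n : ℕ) :
    ((n:ℝ)+1) * ((a+b+1/2) + (n:ℝ)) * (2*(a+b) + (n:ℝ)) * Bc a b (n+1)
      = (2*a + (n:ℝ)) * (2*b + (n:ℝ)) * ((a+b) + (n:ℝ)) * Bc a b n := by
  have p1 : poch (2*a+2*b) n ≠ 0 := poch_ne_zero h2 n
  have p2 : poch (a+b+1/2) n ≠ 0 := poch_ne_zero hc n
  have p3 : (Nat.factorial n : ℝ) ≠ 0 := Nat.cast_ne_zero.mpr (Nat.factorial_ne_zero n)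
  have q1 : (2*a+2*b+(n:ℝ)) ≠ 0 := fun h => h2 n (by linarith)
  have q2 : (a+b+1/2+(n:ℝ)) ≠ 0 := fun h => hc n (by linarith)
  have q3 : ((n:ℝ)+1) ≠ 0 := by positivity
  have e1 := Bc_mul a b hc h2 (n+1)
  have e0 := Bc_mul a b hc h2 n
  rw [poch_succ, poch_succ, poch_succ, poch_succ, poch_succ, Nat.factorial_succ] at e1
  push_cast at e1
  apply mul_right_cancel₀ (b := poch (2*a+2*b) n * poch (a+b+1/2) n * (Nat.factorial n : ℝ)
    * ((2*a+2*b+(n:ℝ)) * (a+b+1/2+(n:ℝ)) * ((n:ℝ)+1)))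
    (mul_ne_zero (mul_ne_zero (mul_ne_zero p1 p2) p3)
      (mul_ne_zero (mul_ne_zero q1 q2) q3))
  linear_combination (((n:ℝ)+1) * ((a+b+1/2) + (n:ℝ)) * (2*(a+b) + (n:ℝ))) * e1
    - ((2*a + (n:ℝ)) * (2*b + (n:ℝ)) * ((a+b) + (n:ℝ))
        * ((2*a+2*b+(n:ℝ)) * (a+b+1/2+(n:ℝ)) * ((n:ℝ)+1))) * e0

lemma Sc_eq_Bc (a b : ℝ) (hc : ∀ n : ℕ, a + b + 1/2 ≠ -(n : ℝ))
    (h2 : ∀ n : ℕ, 2 * a + 2 * b ≠ -(n : ℝ)) (n : ℕ) : Sc a b n = Bc a b n := by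
  induction n with
  | zero => simp [Sc, Bc, Ac_zero, poch_zero]
  | succ n ih =>
    have hα : ((n:ℝ)+1) * ((a+b+1/2) + (n:ℝ)) * (2*(a+b) + (n:ℝ)) ≠ 0 := by
      refine mul_ne_zero (mul_ne_zero ?_ ?_) ?_
      · positivity
      · exact fun h => hc n (by linarith)
      · exact fun h => h2 n (by linarith)
    apply mul_left_cancel₀ hα
    rw [Sc_rec a b hc n, Bc_rec a b hc h2 n, ih]

open Filter in
lemma summable_norm_term (a b z : ℝ) (hz : |z| < 1)
    (hc : ∀ n : ℕ, a + b + 1/2 ≠ -(n : ℝ)) :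
    Summable (fun k : ℕ => ‖Ac a b (a+b+1/2) k * z ^ k‖) := by
  set c := a + b + 1/2 with hcdef
  have hrat : ∀ k : ℕ, Ac a b c (k+1) * z ^ (k+1)
      = (Ac a b c k * z ^ k) * (((a+(k:ℝ))*(b+(k:ℝ)))/(((k:ℝ)+1)*(c+(k:ℝ))) * z) := by
    intro k
    have hd : (((k:ℝ)+1)*(c+(k:ℝ))) ≠ 0 :=
      mul_ne_zero (by positivity) (fun h => hc k (by linarith))
    have h' : Ac a b c (k+1) = Ac a b c k * ((a+(k:ℝ))*(b+(k:ℝ))) / (((k:ℝ)+1)*(c+(k:ℝ))) := by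
      rw [eq_div_iff hd]; exact Ac_succ a b c hc k
    rw [h', pow_succ]; ring
  have hk1 : Tendsto (fun k : ℕ => (k:ℝ)+1) atTop atTop :=
    tendsto_atTop_add_const_right _ _ tendsto_natCast_atTop_atTop
  have hk2 : Tendsto (fun k : ℕ => c+(k:ℝ)) atTop atTop :=
    tendsto_atTop_add_const_left _ c tendsto_natCast_atTop_atTop
  have t1 : Tendsto (fun k : ℕ => (a+(k:ℝ))/((k:ℝ)+1)) atTop (nhds 1) := by
    have heq : (fun k : ℕ => (a+(k:ℝ))/((k:ℝ)+1)) = fun k : ℕ => 1 + (a-1)/((k:ℝ)+1) := by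
      funext k
      have hk : ((k:ℝ)+1) ≠ 0 := by positivity
      field_simp
      ring
    rw [heq]
    simpa using tendsto_const_nhds.add (Tendsto.div_atTop tendsto_const_nhds hk1)
  have t2 : Tendsto (fun k : ℕ => (b+(k:ℝ))/(c+(k:ℝ))) atTop (nhds 1) := by
    have heq : ∀ᶠ k : ℕ in atTop, 1 + (b-c)/(c+(k:ℝ)) = (b+(k:ℝ))/(c+(k:ℝ)) := by
      filter_upwards [hk2.eventually_gt_atTop 0] with k hk
      have hk' : (c+(k:ℝ)) ≠ 0 := ne_of_gt hk
      field_simp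
      ring
    have := Tendsto.add (tendsto_const_nhds (x := (1:ℝ)))
      (Tendsto.div_atTop (tendsto_const_nhds (x := b - c)) hk2)
    simpa using this.congr' heq
  have t3 : Tendsto (fun k : ℕ => ((a+(k:ℝ))*(b+(k:ℝ)))/(((k:ℝ)+1)*(c+(k:ℝ))) * z)
      atTop (nhds z) := by
    have := (t1.mul t2).mul_const z
    simp only [div_mul_div_comm, one_mul] at this
    exact this
  have t4 : Tendsto (fun k : ℕ => |((a+(k:ℝ))*(b+(k:ℝ)))/(((k:ℝ)+1)*(c+(k:ℝ))) * z|)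
      atTop (nhds |z|) := t3.abs
  have hr : |z| < (1+|z|)/2 := by linarith
  have hr1 : (1+|z|)/2 < 1 := by linarith
  have hev := t4.eventually_lt_const hr
  apply summable_of_ratio_norm_eventually_le hr1
  filter_upwards [hev] with k hk
  rw [norm_norm, norm_norm, hrat k, norm_mul]
  have h0 : ‖Ac a b c k * z ^ k‖ ≥ 0 := norm_nonneg _
  have : ‖((a+(k:ℝ))*(b+(k:ℝ)))/(((k:ℝ)+1)*(c+(k:ℝ))) * z‖ ≤ (1+|z|)/2 := by
    rw [Real.norm_eq_abs]; exact hk.le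
  calc ‖Ac a b c k * z ^ k‖ * ‖((a+(k:ℝ))*(b+(k:ℝ)))/(((k:ℝ)+1)*(c+(k:ℝ))) * z‖
      ≤ ‖Ac a b c k * z ^ k‖ * ((1+|z|)/2) := by
        exact mul_le_mul_of_nonneg_left this h0
    _ = (1+|z|)/2 * ‖Ac a b c k * z ^ k‖ := by ring

open Finset in
/-- Clausen's identity:
`₂F₁(a, b; a+b+1/2; z)² = ₃F₂(2a, 2b, a+b; 2a+2b, a+b+1/2; z)` for `|z| < 1`,
provided no lower parameter is a nonpositive integer. -/
theorem clausen_identity (a b z : ℝ) (hz : |z| < 1)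
    (h1 : ∀ n : ℕ, a + b + 1 / 2 ≠ -(n : ℝ))
    (h2 : ∀ n : ℕ, 2 * a + 2 * b ≠ -(n : ℝ)) :
    F21 a b (a + b + 1 / 2) z ^ 2
      = F32 (2 * a) (2 * b) (a + b) (2 * a + 2 * b) (a + b + 1 / 2) z := by
  have hs := summable_norm_term a b z hz h1
  have hF : F21 a b (a + b + 1/2) z = ∑' k : ℕ, Ac a b (a+b+1/2) k * z ^ k := by
    simp only [F21, Ac]
  rw [hF, sq, tsum_mul_tsum_eq_tsum_sum_antidiagonal_of_summable_norm hs hs, F32]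
  refine tsum_congr fun n => ?_
  have step1 : ∑ kl ∈ Finset.HasAntidiagonal.antidiagonal n,
      Ac a b (a+b+1/2) kl.1 * z ^ kl.1 * (Ac a b (a+b+1/2) kl.2 * z ^ kl.2)
      = ∑ k ∈ Finset.range (n+1),
        Ac a b (a+b+1/2) k * z ^ k * (Ac a b (a+b+1/2) (n-k) * z ^ (n-k)) :=
    Finset.Nat.sum_antidiagonal_eq_sum_range_succ_mk _ n
  have step2 : ∑ k ∈ Finset.range (n+1),
      Ac a b (a+b+1/2) k * z ^ k * (Ac a b (a+b+1/2) (n-k) * z ^ (n-k))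
      = Sc a b n * z ^ n := by
    rw [Sc, Finset.sum_mul]
    refine Finset.sum_congr rfl fun k hk => ?_
    have hkn : k ≤ n := Nat.lt_succ_iff.mp (Finset.mem_range.mp hk)
    calc Ac a b (a+b+1/2) k * z ^ k * (Ac a b (a+b+1/2) (n-k) * z ^ (n-k))
        = Ac a b (a+b+1/2) k * Ac a b (a+b+1/2) (n-k) * (z ^ k * z ^ (n-k)) := by ring
      _ = Ac a b (a+b+1/2) k * Ac a b (a+b+1/2) (n-k) * z ^ n := by
          rw [← pow_add, Nat.add_sub_cancel' hkn]
  rw [step1, step2, Sc_eq_Bc a b h1 h2 n]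
  simp only [Bc]
end

section
/- Bauer–Ramanujan series: Σ_{j=0}^∞ (1 + 6j) · ((1/2)_j)³/(j!)³ · (1/4)^j = 4/π. -/
open Filter Finset

namespace BauerRamanujan

/-- `(1/2)_n` -/
noncomputable def P (n : ℕ) : ℝ := (ascPochhammer ℝ n).eval (1/2 : ℝ)

lemma P_zero : P 0 = 1 := by simp [P]

lemma P_succ (n : ℕ) : P (n+1) = P n * (n + 1/2) := by
  unfold P
  rw [ascPochhammer_succ_right, Polynomial.eval_mul, Polynomial.eval_add,
    Polynomial.eval_X, Polynomial.eval_natCast]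
  ring

lemma P_pos (n : ℕ) : 0 < P n := by
  induction n with
  | zero => simp [P_zero]
  | succ n ih => rw [P_succ]; positivity

lemma fact_cast_pos (m : ℕ) : (0:ℝ) < (m.factorial : ℝ) := by
  exact_mod_cast m.factorial_pos

lemma P_le_factorial (n : ℕ) : P n ≤ n.factorial := by
  induction n with
  | zero => simp [P_zero]
  | succ n ih =>
      rw [P_succ, Nat.factorial_succ]
      push_cast
      have h1 : (n : ℝ) + 1/2 ≤ n + 1 := by norm_num
      have h2 := (P_pos n).le
      have h3 := fact_cast_pos n
      nlinarith

/-- The WZ-style function. -/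
noncomputable def Fk (n k : ℕ) : ℝ :=
  (6*n+4*k+1) * P n ^ 3 * P k ^ 2 /
    ((n.factorial : ℝ) * ((n+k).factorial : ℝ)^2 * 4^n)

noncomputable def Gk (n k : ℕ) : ℝ :=
  (-(8:ℝ)*n) * P n ^ 3 * P k ^ 2 /
    ((n.factorial : ℝ) * ((n+k).factorial : ℝ)^2 * 4^n)

/-- The WZ certificate identity. -/
lemma certificate (n k : ℕ) : Fk n k - Fk n (k+1) = Gk (n+1) k - Gk n k := by
  unfold Fk Gk
  have h1 : n + (k+1) = (n+k) + 1 := by ring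
  have h2 : (n+1) + k = (n+k) + 1 := by ring
  rw [h1, h2, Nat.factorial_succ (n+k), Nat.factorial_succ n, P_succ n, P_succ k]
  have hfn := fact_cast_pos n
  have hfnk := fact_cast_pos (n+k)
  have h4 : (4:ℝ)^n ≠ 0 := by positivity
  push_cast
  field_simp
  ring

lemma Fk_nonneg (n k : ℕ) : 0 ≤ Fk n k := by
  unfold Fk
  have := P_pos n; have := P_pos k
  positivity

lemma aux_fact_le (n k : ℕ) :
    (n.factorial : ℝ) * (k.factorial : ℝ) ≤ ((n+k).factorial : ℝ) := by
  exact_mod_cast Nat.le_of_dvd (n+k).factorial_pos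
    (Nat.factorial_mul_factorial_dvd_factorial_add n k)

lemma num_le (n k : ℕ) : P n ^ 3 * P k ^ 2 ≤ (n.factorial : ℝ) * ((n+k).factorial : ℝ)^2 := by
  have hPn := (P_pos n).le
  have hPk := (P_pos k).le
  have h1 : P n ≤ n.factorial := P_le_factorial n
  have h2 : P k ≤ k.factorial := P_le_factorial k
  have h3 : P n * P k ≤ ((n+k).factorial : ℝ) := by
    refine le_trans ?_ (aux_fact_le n k)
    have := fact_cast_pos n
    nlinarith
  have h4 : (P n * P k)^2 ≤ ((n+k).factorial : ℝ)^2 := by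
    apply pow_le_pow_left₀ (by positivity) h3
  have h5 : P n * (P n * P k)^2 ≤ (n.factorial : ℝ) * ((n+k).factorial : ℝ)^2 :=
    mul_le_mul h1 h4 (by positivity) (fact_cast_pos n).le
  nlinarith

/-- crude bound sufficient for summability -/
lemma Fk_le (n k : ℕ) : Fk n k ≤ (6*n+4*k+1) * (1/4)^n := by
  unfold Fk
  have hden : (0:ℝ) < (n.factorial : ℝ) * ((n+k).factorial : ℝ)^2 * 4^n := by
    have := fact_cast_pos n; have := fact_cast_pos (n+k); positivity
  rw [div_le_iff₀ hden]
  have hc : (0:ℝ) ≤ 6*(n:ℝ)+4*k+1 := by positivity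
  calc (6*(n:ℝ)+4*(k:ℝ)+1) * P n ^ 3 * P k ^ 2
      = (6*(n:ℝ)+4*(k:ℝ)+1) * (P n ^3 * P k ^2) := by ring
    _ ≤ (6*(n:ℝ)+4*(k:ℝ)+1) * ((n.factorial : ℝ) * ((n+k).factorial : ℝ)^2) :=
        mul_le_mul_of_nonneg_left (num_le n k) hc
    _ = (6*(n:ℝ)+4*(k:ℝ)+1) * (1/4)^n * ((n.factorial : ℝ) * ((n+k).factorial : ℝ)^2 * 4^n) := by
        rw [div_pow, one_pow]
        have : (4:ℝ)^n ≠ 0 := by positivity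
        field_simp

lemma summable_poly_geom (a b : ℝ) : Summable (fun n : ℕ => (a*n+b) * (1/4)^n) := by
  have h1 : Summable (fun n : ℕ => (n:ℝ) * (1/4)^n) := by
    have hn : ‖(1/4:ℝ)‖ < 1 := by
      rw [Real.norm_eq_abs, abs_of_pos] <;> norm_num
    simpa using summable_pow_mul_geometric_of_norm_lt_one 1 hn
  have h2 : Summable (fun n : ℕ => (1/4:ℝ)^n) :=
    summable_geometric_of_lt_one (by norm_num) (by norm_num)
  have h := (h1.mul_left a).add (h2.mul_left b)
  apply h.congr
  intro n
  ring

lemma summable_Fk (k : ℕ) : Summable (fun n => Fk n k) := by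
  apply Summable.of_nonneg_of_le (fun n => Fk_nonneg n k) (fun n => Fk_le n k)
  apply (summable_poly_geom 6 (4*k+1)).congr
  intro n
  ring

lemma Gk_zero (k : ℕ) : Gk 0 k = 0 := by simp [Gk]

lemma Gk_abs_le (n k : ℕ) : |Gk n k| ≤ 8*n*(1/4)^n := by
  unfold Gk
  have hPn := P_pos n
  have hPk := P_pos k
  have hfn := fact_cast_pos n
  have hfnk := fact_cast_pos (n+k)
  have hdpos : (0:ℝ) < (n.factorial : ℝ) * ((n+k).factorial : ℝ)^2 * 4^n := by positivity
  rw [abs_div, abs_of_pos hdpos]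
  have habs : |(-(8:ℝ)*n) * P n ^ 3 * P k ^ 2| = 8*n * (P n ^3 * P k ^2) := by
    have he : (-(8:ℝ)*n) * P n ^ 3 * P k ^ 2 = -((8*n) * (P n ^3 * P k ^2)) := by ring
    rw [he, abs_neg, abs_of_nonneg (by positivity)]
  rw [habs, div_le_iff₀ hdpos]
  calc 8*(n:ℝ) * (P n ^3 * P k ^2)
      ≤ 8*n * ((n.factorial : ℝ) * ((n+k).factorial : ℝ)^2) :=
        mul_le_mul_of_nonneg_left (num_le n k) (by positivity)
    _ = 8*n*(1/4)^n * ((n.factorial : ℝ) * ((n+k).factorial : ℝ)^2 * 4^n) := by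
        rw [div_pow, one_pow]
        have : (4:ℝ)^n ≠ 0 := by positivity
        field_simp

lemma Gk_tendsto_zero (k : ℕ) : Tendsto (fun n => Gk n k) atTop (nhds 0) := by
  apply squeeze_zero_norm (fun n => Gk_abs_le n k)
  have h : Summable (fun n : ℕ => 8*(n:ℝ)*(1/4)^n) := by
    apply (summable_poly_geom 8 0).congr
    intro n; ring
  exact h.tendsto_atTop_zero

noncomputable def S (k : ℕ) : ℝ := ∑' n, Fk n k

lemma S_succ (k : ℕ) : S (k+1) = S k := by
  have hsum : Summable (fun n => Fk n k - Fk n (k+1)) :=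
    (summable_Fk k).sub (summable_Fk (k+1))
  have htel : ∀ N, ∑ n ∈ range N, (Fk n k - Fk n (k+1)) = Gk N k := by
    intro N
    rw [Finset.sum_congr rfl (fun n _ => certificate n k),
      Finset.sum_range_sub (fun n => Gk n k), Gk_zero, sub_zero]
  have hpartial : Tendsto (fun N => ∑ n ∈ range N, (Fk n k - Fk n (k+1))) atTop
      (nhds (∑' n, (Fk n k - Fk n (k+1)))) := hsum.hasSum.tendsto_sum_nat
  have hpartial' : Tendsto (fun N => ∑ n ∈ range N, (Fk n k - Fk n (k+1))) atTop (nhds 0) := by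
    simpa [htel] using Gk_tendsto_zero k
  have h1 : ∑' n, (Fk n k - Fk n (k+1)) = 0 := tendsto_nhds_unique hpartial hpartial'
  have hdiff : S k - S (k+1) = 0 := by
    rw [S, S, ← Summable.tsum_sub (summable_Fk k) (summable_Fk (k+1)), h1]
  linarith

lemma S_eq_S0 (k : ℕ) : S k = S 0 := by
  induction k with
  | zero => rfl
  | succ k ih => rw [S_succ, ih]

/-- Wallis connection: `(2k+1) (P k / k!)² W k = 1`. -/
lemma wallis_key (k : ℕ) :
    (2*(k:ℝ)+1) * (P k / k.factorial)^2 * Real.Wallis.W k = 1 := by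
  induction k with
  | zero => simp [P_zero, Real.Wallis.W]
  | succ k ih =>
      have hf := fact_cast_pos k
      have h1 : ((2:ℝ)*k+1) ≠ 0 := by positivity
      have h2 : ((2:ℝ)*k+3) ≠ 0 := by positivity
      have h3 : ((2:ℝ)*k+2) ≠ 0 := by positivity
      have hP : P (k+1) / ((k+1).factorial : ℝ)
          = (P k / k.factorial) * ((2*k+1)/(2*k+2)) := by
        rw [P_succ, Nat.factorial_succ]
        push_cast
        field_simp
      rw [Real.Wallis.W_succ, hP]
      have hfactor : (2*((k:ℕ)+1:ℝ)+1) * ((P k / k.factorial) * ((2*(k:ℝ)+1)/(2*k+2)))^2 *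
          (Real.Wallis.W k * ((2*(k:ℝ)+2)/(2*k+1) * ((2*k+2)/(2*k+3))))
          = (2*(k:ℝ)+1) * (P k / k.factorial)^2 * Real.Wallis.W k := by
        field_simp
        ring
      push_cast
      push_cast at hfactor
      rw [hfactor]
      exact ih

lemma tendsto_F0 : Tendsto (fun k => Fk 0 k) atTop (nhds (4/Real.pi)) := by
  have hW := Real.Wallis.tendsto_W_nhds_pi_div_two
  have hpi : Real.pi / 2 ≠ 0 := by positivity
  have hinv : Tendsto (fun k => (Real.Wallis.W k)⁻¹) atTop (nhds (Real.pi/2)⁻¹) :=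
    hW.inv₀ hpi
  have heq : ∀ k : ℕ, (2*(k:ℝ)+1) * (P k / k.factorial)^2 = (Real.Wallis.W k)⁻¹ := by
    intro k
    have hWp := Real.Wallis.W_pos k
    rw [inv_eq_one_div, eq_div_iff hWp.ne']
    exact wallis_key k
  have hmain : Tendsto (fun k : ℕ => (2*(k:ℝ)+1) * (P k / k.factorial)^2) atTop
      (nhds (2/Real.pi)) := by
    have h2 : (Real.pi/2)⁻¹ = 2/Real.pi := by
      rw [inv_div]
    rw [← h2]
    simpa [heq] using hinv
  have hzero : Tendsto (fun k : ℕ => (P k / k.factorial)^2) atTop (nhds 0) := by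
    have hrecip : Tendsto (fun k : ℕ => ((2*(k:ℝ)+1))⁻¹) atTop (nhds 0) := by
      apply Tendsto.inv_tendsto_atTop
      apply tendsto_atTop_add_const_right
      exact (tendsto_natCast_atTop_atTop (R := ℝ)).const_mul_atTop (by norm_num)
    have h := hmain.mul hrecip
    rw [mul_zero] at h
    apply h.congr
    intro k
    have hk : (2*(k:ℝ)+1) ≠ 0 := by positivity
    field_simp
  have hF0eq : ∀ k : ℕ, Fk 0 k =
      2 * ((2*(k:ℝ)+1) * (P k / k.factorial)^2) - (P k / k.factorial)^2 := by
    intro k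
    unfold Fk
    rw [P_zero]
    have hf := fact_cast_pos k
    simp only [Nat.zero_add, zero_add, Nat.factorial_zero, Nat.cast_zero, Nat.cast_one, pow_zero]
    field_simp
    ring
  have hfin : Tendsto (fun k : ℕ =>
      2 * ((2*(k:ℝ)+1) * (P k / k.factorial)^2) - (P k / k.factorial)^2) atTop
      (nhds (2 * (2/Real.pi) - 0)) := (hmain.const_mul 2).sub hzero
  rw [show (4:ℝ)/Real.pi = 2*(2/Real.pi) - 0 by ring]
  exact Tendsto.congr (fun k => (hF0eq k).symm) hfin

/-- Refined tail bound. -/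
lemma Fk_tail_le (n k : ℕ) :
    Fk (n+1) k ≤ (6*n+7)*((n:ℝ)+1)^2*(1/4)^(n+1) / ((k:ℝ)+1) := by
  have hfn := fact_cast_pos (n+1)
  have hfnk := fact_cast_pos (n+1+k)
  have hfk := fact_cast_pos k
  have hfn' := fact_cast_pos n
  -- (n+1+k)! ≥ (k+1) * n! * k!
  have key : ((k:ℝ)+1) * ((n.factorial : ℝ) * (k.factorial : ℝ)) ≤ ((n+1+k).factorial : ℝ) := by
    have h1 : (n+1+k) = (n+k)+1 := by ring
    rw [h1, Nat.factorial_succ]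
    push_cast
    have h2 := aux_fact_le n k
    have h3 : (k:ℝ)+1 ≤ (n:ℝ)+(k:ℝ)+1 := by
      have : (0:ℝ) ≤ (n:ℝ) := Nat.cast_nonneg n
      linarith
    have h4 : (0:ℝ) < (n.factorial : ℝ) * (k.factorial : ℝ) := by positivity
    nlinarith
  have hnum : P (n+1) ^ 3 * P k ^ 2 ≤ ((n+1).factorial : ℝ)^3 * (k.factorial:ℝ)^2 := by
    have h1 := P_le_factorial (n+1)
    have h2 := P_le_factorial k
    have hp1 := (P_pos (n+1)).le
    have hp2 := (P_pos k).le
    have e1 : P (n+1)^3 ≤ ((n+1).factorial : ℝ)^3 := pow_le_pow_left₀ hp1 h1 3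
    have e2 : P k^2 ≤ (k.factorial:ℝ)^2 := pow_le_pow_left₀ hp2 h2 2
    exact mul_le_mul e1 e2 (by positivity) (by positivity)
  have step1 : Fk (n+1) k ≤ (6*(n:ℝ)+4*k+7)*((n:ℝ)+1)^2*(1/4)^(n+1) / ((k:ℝ)+1)^2 := by
    unfold Fk
    have hden : (0:ℝ) < ((n+1).factorial : ℝ) * ((n+1+k).factorial : ℝ)^2 * 4^(n+1) := by
      positivity
    rw [div_le_div_iff₀ hden (by positivity : (0:ℝ) < ((k:ℝ)+1)^2)]
    have hcoef : (6*((n:ℕ)+1:ℝ)+4*(k:ℝ)+1) = (6*(n:ℝ)+4*(k:ℝ)+7) := by push_cast; ring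
    have hkey2 : (((k:ℝ)+1) * ((n.factorial : ℝ) * (k.factorial : ℝ)))^2 ≤ ((n+1+k).factorial : ℝ)^2 :=
      pow_le_pow_left₀ (by positivity) key 2
    have hfacts : ((n+1).factorial : ℝ) = ((n:ℝ)+1) * (n.factorial : ℝ) := by
      rw [Nat.factorial_succ]; push_cast; ring
    have h4pow : (1/4:ℝ)^(n+1) * (4:ℝ)^(n+1) = 1 := by
      rw [div_pow, one_pow]
      field_simp
    have hcpos : (0:ℝ) ≤ 6*(n:ℝ)+4*(k:ℝ)+7 := by positivity
    -- LHS = coef * num * (k+1)^2 ≤ coef * (n+1)!³k!² * (k+1)²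
    --     = coef*(n+1)²*(n+1)!*((k+1)n!k!)² ≤ coef*(n+1)²*(n+1)!*((n+1+k)!)²
    push_cast
    calc (6*((n:ℝ)+1)+4*(k:ℝ)+1) * P (n+1) ^ 3 * P k ^ 2 * ((k:ℝ)+1)^2
        = (6*(n:ℝ)+4*(k:ℝ)+7) * (P (n+1) ^ 3 * P k ^ 2) * ((k:ℝ)+1)^2 := by
          ring
      _ ≤ (6*(n:ℝ)+4*(k:ℝ)+7) * (((n+1).factorial : ℝ)^3 * (k.factorial:ℝ)^2) * ((k:ℝ)+1)^2 := by
          apply mul_le_mul_of_nonneg_right (mul_le_mul_of_nonneg_left hnum hcpos) (by positivity)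
      _ = (6*(n:ℝ)+4*(k:ℝ)+7) * ((n:ℝ)+1)^2 * ((n+1).factorial : ℝ) *
            ((((k:ℝ)+1) * ((n.factorial : ℝ) * (k.factorial : ℝ)))^2) := by
          rw [hfacts]; ring
      _ ≤ (6*(n:ℝ)+4*(k:ℝ)+7) * ((n:ℝ)+1)^2 * ((n+1).factorial : ℝ) *
            (((n+1+k).factorial : ℝ)^2) := by
          apply mul_le_mul_of_nonneg_left hkey2 (by positivity)
      _ = (6*(n:ℝ)+4*(k:ℝ)+7)*((n:ℝ)+1)^2*(1/4)^(n+1) *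
            (((n+1).factorial : ℝ) * ((n+1+k).factorial : ℝ)^2 * 4^(n+1)) := by
          rw [div_pow, one_pow]
          have h4ne : ((4:ℝ))^(n+1) ≠ 0 := by positivity
          field_simp
  refine step1.trans ?_
  rw [div_le_div_iff₀ (by positivity : (0:ℝ) < ((k:ℝ)+1)^2) (by positivity : (0:ℝ) < (k:ℝ)+1)]
  have hb : (6*(n:ℝ)+4*(k:ℝ)+7) ≤ (6*(n:ℝ)+7)*((k:ℝ)+1) := by
    nlinarith [Nat.cast_nonneg (α := ℝ) n, Nat.cast_nonneg (α := ℝ) k]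
  have hX : (0:ℝ) ≤ ((n:ℝ)+1)^2*(1/4)^(n+1)*((k:ℝ)+1) := by positivity
  have h := mul_le_mul_of_nonneg_right hb hX
  nlinarith [h]

noncomputable def C : ℝ := ∑' n : ℕ, (6*(n:ℝ)+7)*((n:ℝ)+1)^2*(1/4)^(n+1)

lemma summable_c : Summable (fun n : ℕ => (6*(n:ℝ)+7)*((n:ℝ)+1)^2*(1/4)^(n+1)) := by
  have hr : ‖(1/4:ℝ)‖ < 1 := by
    rw [Real.norm_eq_abs, abs_of_pos (by norm_num : (0:ℝ) < 1/4)]; norm_num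
  have h0 : Summable (fun n : ℕ => (1/4:ℝ)^n) :=
    summable_geometric_of_lt_one (by norm_num) (by norm_num)
  have h1 := summable_pow_mul_geometric_of_norm_lt_one (r := (1/4:ℝ)) 1 hr
  have h2 := summable_pow_mul_geometric_of_norm_lt_one (r := (1/4:ℝ)) 2 hr
  have h3 := summable_pow_mul_geometric_of_norm_lt_one (r := (1/4:ℝ)) 3 hr
  have h := ((((h3.mul_left 6).add (h2.mul_left 19)).add
    ((h1.mul_left 20).add (h0.mul_left 7))).mul_left (1/4 : ℝ))
  apply h.congr
  intro n
  rw [pow_succ]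
  ring

lemma summable_Fk_shift (k : ℕ) : Summable (fun n => Fk (n+1) k) :=
  (summable_nat_add_iff 1).mpr (summable_Fk k)

lemma S_split (k : ℕ) : S k = Fk 0 k + ∑' n, Fk (n+1) k := by
  rw [S, Summable.tsum_eq_zero_add (summable_Fk k)]

lemma tail_le (k : ℕ) : ∑' n, Fk (n+1) k ≤ C / ((k:ℝ)+1) := by
  have h1 : ∑' n, Fk (n+1) k ≤ ∑' n : ℕ, (6*(n:ℝ)+7)*((n:ℝ)+1)^2*(1/4)^(n+1) / ((k:ℝ)+1) :=
    Summable.tsum_le_tsum (fun n => Fk_tail_le n k) (summable_Fk_shift k) (summable_c.div_const _)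
  rw [tsum_div_const] at h1
  exact h1

lemma tail_nonneg (k : ℕ) : 0 ≤ ∑' n, Fk (n+1) k :=
  tsum_nonneg (fun n => Fk_nonneg (n+1) k)

lemma tendsto_S : Tendsto S atTop (nhds (4/Real.pi)) := by
  have hCk : Tendsto (fun k : ℕ => C / ((k:ℝ)+1)) atTop (nhds 0) := by
    apply Tendsto.div_atTop tendsto_const_nhds
    exact tendsto_atTop_add_const_right _ 1 (tendsto_natCast_atTop_atTop (R := ℝ))
  have hup : Tendsto (fun k : ℕ => Fk 0 k + C / ((k:ℝ)+1)) atTop (nhds (4/Real.pi)) := by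
    have := tendsto_F0.add hCk
    simpa using this
  apply tendsto_of_tendsto_of_tendsto_of_le_of_le tendsto_F0 hup
  · intro k
    rw [S_split]
    linarith [tail_nonneg k]
  · intro k
    rw [S_split]
    linarith [tail_le k]

lemma S0_eq : S 0 = 4/Real.pi := by
  have h1 : Tendsto S atTop (nhds (S 0)) := by
    have : S = fun _ => S 0 := funext S_eq_S0
    rw [this]
    exact tendsto_const_nhds
  exact tendsto_nhds_unique h1 tendsto_S

end BauerRamanujan

/-- The Bauer–Ramanujan series:
`Σ_{j≥0} (1 + 6j) ((1/2)_j)³/(j!)³ (1/4)^j = 4/π`, where `(1/2)_j` is the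
Pochhammer symbol (rising factorial). -/
theorem bauer_ramanujan_series :
    ∑' j : ℕ, (1 + 6 * (j : ℝ)) *
      ((ascPochhammer ℝ j).eval (1 / 2 : ℝ)) ^ 3 / (Nat.factorial j : ℝ) ^ 3 *
        (1 / 4 : ℝ) ^ j = 4 / Real.pi := by
  rw [← BauerRamanujan.S0_eq, BauerRamanujan.S]
  apply tsum_congr
  intro n
  unfold BauerRamanujan.Fk
  rw [BauerRamanujan.P_zero]
  have hf := BauerRamanujan.fact_cast_pos n
  have h4 : (4:ℝ)^n ≠ 0 := by positivity
  simp only [Nat.cast_zero, mul_zero, add_zero, Nat.add_zero, one_pow, mul_one]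
  unfold BauerRamanujan.P
  rw [div_pow, one_pow]
  field_simp
  ring
end
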